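/- arXiv:1807.07268 — 4 statements merged into one kernel-verified Lean document; each statement's English description precedes it below -/
import Mathlib

section
/- Let V be an invertible n×n positive definite real matrix and δ the first standard basis vector e_1. Define P_δ = V^{-1} - V^{-1} δ (δ^T V^{-1} δ)^{-1} δ^T V^{-1}. Then P_δ is the block matrix [[0, 0^T],[0, V_[1]^{-1}]], where V_[1] is the submatrix of V obtained by deleting the first row and column. -/
open Matrix

lemma posdef_submatrix_succ {n : ℕ} {V : Matrix (Fin (n + 1)) (Fin (n + 1)) ℝ}
    (hV : V.PosDef) : (V.submatrix Fin.succ Fin.succ).PosDef := by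
  refine PosDef.of_dotProduct_mulVec_pos (hV.1.submatrix _) fun x hx => ?_
  have hy : (Fin.cons 0 x : Fin (n+1) → ℝ) ≠ 0 := by
    intro h
    apply hx
    ext i
    have := congrFun h i.succ
    simpa using this
  have := hV.dotProduct_mulVec_pos hy
  convert this using 1
  simp [dotProduct, mulVec, Fin.sum_univ_succ, Finset.mul_sum, Finset.sum_mul, mul_comm]

/-- Proposition 3: `P_δ` with `δ = e₁` is the block matrix `[[0, 0ᵀ], [0, V_[1]⁻¹]]`. -/
theorem stmt_1 {n : ℕ} (V : Matrix (Fin (n + 1)) (Fin (n + 1)) ℝ)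
    (hV : V.PosDef)
    (δ : Fin (n + 1) → ℝ) (hδ : δ = Pi.single 0 1)
    (Pδ : Matrix (Fin (n + 1)) (Fin (n + 1)) ℝ)
    (hPδ : Pδ = V⁻¹ - (δ ⬝ᵥ V⁻¹ *ᵥ δ)⁻¹ • (V⁻¹ * vecMulVec δ δ * V⁻¹)) :
    (∀ j, Pδ 0 j = 0) ∧ (∀ i, Pδ i 0 = 0) ∧
      Pδ.submatrix Fin.succ Fin.succ = (V.submatrix Fin.succ Fin.succ)⁻¹ := by
  set W := V⁻¹ with hWdef
  have hWpd : W.PosDef := hV.inv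
  have hW00 : 0 < W 0 0 := by
    have hne : (Pi.single 0 1 : Fin (n+1) → ℝ) ≠ 0 := by
      intro h
      have := congrFun h 0
      simp at this
    have := hWpd.dotProduct_mulVec_pos hne
    simpa [dotProduct, mulVec, Pi.single_apply, Finset.mul_sum] using this
  have hW00' : W 0 0 ≠ 0 := hW00.ne'
  have hquad : δ ⬝ᵥ W *ᵥ δ = W 0 0 := by
    subst hδ
    simp [dotProduct, mulVec, Pi.single_apply, Finset.mul_sum]
  have hvmv : ∀ i j, (W * vecMulVec δ δ * W) i j = W i 0 * W 0 j := by
    subst hδ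
    intro i j
    simp [mul_apply, vecMulVec_apply, Pi.single_apply, Finset.mul_sum, Finset.sum_mul]
  have key : ∀ i j, Pδ i j = W i j - (W 0 0)⁻¹ * (W i 0 * W 0 j) := by
    intro i j
    rw [hPδ]
    simp [hquad, hvmv i j]
  have hWV : W * V = 1 := nonsing_inv_mul V hV.det_pos.ne'.isUnit
  refine ⟨?_, ?_, ?_⟩
  · intro j
    rw [key]
    field_simp
    simp
  · intro i
    rw [key]
    field_simp
    simp
  · have hApd := posdef_submatrix_succ hV
    have hmul : Pδ.submatrix Fin.succ Fin.succ * V.submatrix Fin.succ Fin.succ = 1 := by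
      ext i j
      rw [mul_apply]
      simp only [submatrix_apply]
      have h1 : W i.succ 0 * V 0 j.succ + ∑ k : Fin n, W i.succ k.succ * V k.succ j.succ
          = (1 : Matrix (Fin (n+1)) (Fin (n+1)) ℝ) i.succ j.succ := by
        rw [← hWV, mul_apply, Fin.sum_univ_succ]
      have h2 : W 0 0 * V 0 j.succ + ∑ k : Fin n, W 0 k.succ * V k.succ j.succ = 0 := by
        have : (W * V) 0 j.succ = 0 := by
          rw [hWV]
          simp [one_apply, (Fin.succ_ne_zero j).symm]
        rw [← this, mul_apply, Fin.sum_univ_succ]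
      have hone : (1 : Matrix (Fin (n+1)) (Fin (n+1)) ℝ) i.succ j.succ
          = (1 : Matrix (Fin n) (Fin n) ℝ) i j := by
        simp [one_apply, Fin.succ_inj]
      simp only [key, sub_mul, Finset.sum_sub_distrib]
      have h3 : ∑ k : Fin n, (W 0 0)⁻¹ * (W i.succ 0 * W 0 k.succ) * V k.succ j.succ
          = (W 0 0)⁻¹ * W i.succ 0 * ∑ k : Fin n, W 0 k.succ * V k.succ j.succ := by
        rw [Finset.mul_sum]
        exact Finset.sum_congr rfl fun k _ => by ring
      rw [hone] at h1
      have hT : ∑ k : Fin n, W 0 k.succ * V k.succ j.succ = -(W 0 0 * V 0 j.succ) := by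
        linarith
      rw [h3, hT]
      field_simp
      linear_combination h1
    exact (inv_eq_left_inv hmul).symm
end

section
/- Let V be n×n positive definite, X an n×p matrix, and δ = e_1. Define P_δ = V^{-1} - V^{-1} δ (δ^T V^{-1} δ)^{-1} δ^T V^{-1}. Then X^T P_δ X = X_[1]^T V_[1]^{-1} X_[1] and X^T P_δ y = X_[1]^T V_[1]^{-1} y_[1] for any y ∈ ℝ^n, where subscript [1] denotes deleting the first row (and for V also the first column). Consequently, the generalized-least-squares estimator (X^T P_δ X)^- X^T P_δ y computed from the full data equals the GLS estimator (X_[1]^T V_[1]^{-1} X_[1])^- X_[1]^T V_[1]^{-1} y_[1] computed from the data with the first observation deleted. -/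
open Matrix

/-- Proposition 4: the GLS estimator from the mean-shift outlier model equals the
GLS estimator with the first observation deleted. -/
theorem stmt_2 {n p : ℕ} (V : Matrix (Fin (n + 1)) (Fin (n + 1)) ℝ) (hV : V.PosDef)
    (X : Matrix (Fin (n + 1)) (Fin p) ℝ) (y : Fin (n + 1) → ℝ)
    (δ : Fin (n + 1) → ℝ) (hδ : δ = Pi.single 0 1)
    (Pδ : Matrix (Fin (n + 1)) (Fin (n + 1)) ℝ)
    (hPδ : Pδ = V⁻¹ - (δ ⬝ᵥ V⁻¹ *ᵥ δ)⁻¹ • (V⁻¹ * vecMulVec δ δ * V⁻¹))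
    (X₁ : Matrix (Fin n) (Fin p) ℝ) (hX₁ : X₁ = X.submatrix Fin.succ id)
    (V₁ : Matrix (Fin n) (Fin n) ℝ) (hV₁ : V₁ = V.submatrix Fin.succ Fin.succ)
    (y₁ : Fin n → ℝ) (hy₁ : y₁ = fun i => y i.succ)
    (hinv : IsUnit (X₁ᵀ * V₁⁻¹ * X₁).det) :
    Xᵀ * Pδ * X = X₁ᵀ * V₁⁻¹ * X₁ ∧
      Xᵀ *ᵥ (Pδ *ᵥ y) = X₁ᵀ *ᵥ (V₁⁻¹ *ᵥ y₁) ∧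
      (Xᵀ * Pδ * X)⁻¹ *ᵥ (Xᵀ *ᵥ (Pδ *ᵥ y)) =
        (X₁ᵀ * V₁⁻¹ * X₁)⁻¹ *ᵥ (X₁ᵀ *ᵥ (V₁⁻¹ *ᵥ y₁)) := by
  subst hδ hX₁ hV₁ hy₁
  have hWpd : (V⁻¹).PosDef := hV.inv
  have hW00 : 0 < V⁻¹ 0 0 := by
    have h := hWpd.dotProduct_mulVec_pos (x := Pi.single 0 1) (by
      intro h; have := congrFun h 0; simp [Pi.single_apply] at this)
    simpa [single_dotProduct, mulVec_single] using h
  have hδWδ : (Pi.single 0 1 : Fin (n+1) → ℝ) ⬝ᵥ V⁻¹ *ᵥ (Pi.single 0 1) = V⁻¹ 0 0 := by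
    simp [single_dotProduct, mulVec_single]
  have hPent : ∀ i j, Pδ i j = V⁻¹ i j - (V⁻¹ 0 0)⁻¹ * (V⁻¹ i 0 * V⁻¹ 0 j) := by
    intro i j
    rw [hPδ]
    simp only [Matrix.sub_apply, Matrix.smul_apply, smul_eq_mul, hδWδ, mul_apply, vecMulVec_apply,
      Pi.single_apply]
    congr 1
    congr 1
    simp [mul_ite, ite_mul, Finset.sum_ite_eq', Finset.mem_univ]
  have hVW : V * V⁻¹ = 1 := mul_nonsing_inv V hV.det_pos.ne'.isUnit
  have hP0 : ∀ j, Pδ 0 j = 0 := by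
    intro j
    rw [hPent, ← mul_assoc, inv_mul_cancel₀ hW00.ne', one_mul, sub_self]
  have hP0' : ∀ i, Pδ i 0 = 0 := by
    intro i
    rw [hPent, mul_comm (V⁻¹ i 0), ← mul_assoc, inv_mul_cancel₀ hW00.ne', one_mul, sub_self]
  have hVP : ∀ i j, ∑ k, V i k * Pδ k j
      = (1 : Matrix (Fin (n+1)) (Fin (n+1)) ℝ) i j
        - (V⁻¹ 0 0)⁻¹ * ((1 : Matrix (Fin (n+1)) (Fin (n+1)) ℝ) i 0 * V⁻¹ 0 j) := by
    intro i j
    have h1 : ∀ l, ∑ k, V i k * V⁻¹ k l = (1 : Matrix (Fin (n+1)) (Fin (n+1)) ℝ) i l :=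
      fun l => by rw [← Matrix.mul_apply, hVW]
    calc ∑ k, V i k * Pδ k j
        = ∑ k, (V i k * V⁻¹ k j - (V⁻¹ 0 0)⁻¹ * (V i k * V⁻¹ k 0) * V⁻¹ 0 j) := by
          refine Finset.sum_congr rfl fun k _ => ?_
          rw [hPent]; ring
      _ = (∑ k, V i k * V⁻¹ k j)
            - (V⁻¹ 0 0)⁻¹ * (∑ k, V i k * V⁻¹ k 0) * V⁻¹ 0 j := by
          rw [Finset.sum_sub_distrib, ← Finset.sum_mul, ← Finset.mul_sum]
      _ = _ := by rw [h1, h1]; ring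
  have hQ : (V.submatrix Fin.succ Fin.succ)⁻¹ = Pδ.submatrix Fin.succ Fin.succ := by
    apply Matrix.inv_eq_right_inv
    ext i j
    calc (V.submatrix Fin.succ Fin.succ * Pδ.submatrix Fin.succ Fin.succ) i j
        = ∑ k : Fin n, V i.succ k.succ * Pδ k.succ j.succ := by
          simp [mul_apply]
      _ = ∑ k : Fin (n+1), V i.succ k * Pδ k j.succ := by
          rw [Fin.sum_univ_succ, hP0, mul_zero, zero_add]
      _ = (1 : Matrix (Fin n) (Fin n) ℝ) i j := by
          rw [hVP]
          simp [Matrix.one_apply, Fin.succ_ne_zero, Fin.succ_inj]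
  have h1 : Xᵀ * Pδ * X
      = (X.submatrix Fin.succ id)ᵀ * (V.submatrix Fin.succ Fin.succ)⁻¹ * X.submatrix Fin.succ id := by
    rw [hQ]
    ext a b
    simp only [mul_apply, transpose_apply, submatrix_apply, id]
    rw [Fin.sum_univ_succ]
    simp only [hP0', mul_zero, Finset.sum_const_zero, zero_mul, zero_add]
    refine Finset.sum_congr rfl fun j _ => ?_
    rw [Fin.sum_univ_succ, hP0, mul_zero, zero_add]
  have h2 : Xᵀ *ᵥ (Pδ *ᵥ y)
      = (X.submatrix Fin.succ id)ᵀ *ᵥ ((V.submatrix Fin.succ Fin.succ)⁻¹ *ᵥ fun i => y i.succ) := by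
    rw [hQ]
    funext a
    simp only [mulVec, dotProduct, transpose_apply, submatrix_apply, id]
    rw [Fin.sum_univ_succ]
    simp only [hP0, zero_mul, Finset.sum_const_zero, mul_zero, zero_add]
    refine Finset.sum_congr rfl fun i _ => ?_
    congr 1
    rw [Fin.sum_univ_succ, hP0', zero_mul, zero_add]
  exact ⟨h1, h2, by rw [h1, h2]⟩
end

section
/- In the setup of Proposition 4 of the paper (V positive definite, X full column rank, δ = e_1 ∉ col(X), G, Z, R as in the mixed model with V = ZGZ^T + R), let (τ̂, φ̂) be the joint GLS estimates from the augmented model and ũ = G Z^T V^{-1}(y - X τ̂ - δ φ̂) the corresponding E-BLUP. Then ũ = G Z_[1]^T V_[1]^{-1}(y_[1] - X_[1] τ̂), i.e., the random effect predictions from the mean-shift outlier model coincide with those from the model fit with the first observation deleted. -/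
open Matrix

set_option linter.unusedSectionVars false
set_option maxHeartbeats 1000000

section helpers
variable {α β γ : Type*} [Fintype α] [Fintype β] [Fintype γ]

lemma vmv_mulVec (v : α → ℝ) (w : β → ℝ) (x : β → ℝ) :
    vecMulVec v w *ᵥ x = (w ⬝ᵥ x) • v := by
  ext i
  simp [vecMulVec_apply, mulVec, dotProduct, Finset.sum_mul, Finset.mul_sum, mul_comm, mul_assoc,
    mul_left_comm]

lemma mul_vmv (B : Matrix α β ℝ) (v : β → ℝ) (w : γ → ℝ) :
    B * vecMulVec v w = vecMulVec (B *ᵥ v) w := by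
  ext i j
  simp [vecMulVec_apply, mul_apply, mulVec, dotProduct, Finset.sum_mul, mul_assoc]

lemma vmv_mul (v : α → ℝ) (w : β → ℝ) (B : Matrix β γ ℝ) :
    vecMulVec v w * B = vecMulVec v (Bᵀ *ᵥ w) := by
  ext i j
  simp [vecMulVec_apply, mul_apply, mulVec, dotProduct, Finset.mul_sum, mul_assoc, mul_comm,
    mul_left_comm]

lemma vmv_mul_vmv (v : α → ℝ) (w x : β → ℝ) (z : γ → ℝ) :
    vecMulVec v w * vecMulVec x z = (w ⬝ᵥ x) • vecMulVec v z := by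
  ext i j
  simp [vecMulVec_apply, mul_apply, dotProduct, Finset.sum_mul, Finset.mul_sum, mul_comm,
    mul_assoc, mul_left_comm]

lemma dot_shift (B : Matrix α β ℝ) (u : α → ℝ) (z : β → ℝ) :
    u ⬝ᵥ (B *ᵥ z) = (Bᵀ *ᵥ u) ⬝ᵥ z := by
  simp only [dotProduct, mulVec, transpose_apply, Finset.mul_sum, Finset.sum_mul]
  rw [Finset.sum_comm]
  exact Finset.sum_congr rfl fun j _ => Finset.sum_congr rfl fun i _ => by
    simp [dotProduct, Finset.mul_sum, Finset.sum_mul, mul_comm, mul_assoc, mul_left_comm]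

end helpers

lemma posDef_submatrix_succ {n : ℕ} {M : Matrix (Fin (n+1)) (Fin (n+1)) ℝ} (hM : M.PosDef) :
    (M.submatrix Fin.succ Fin.succ).PosDef := by
  refine Matrix.PosDef.of_dotProduct_mulVec_pos ?_ ?_
  · exact hM.isHermitian.submatrix _
  · intro x hx
    have hx' : (Fin.cons 0 x : Fin (n+1) → ℝ) ≠ 0 := by
      intro h
      apply hx
      funext i
      have := congrFun h i.succ
      simpa using this
    have := hM.dotProduct_mulVec_pos hx'
    simpa [dotProduct, mulVec, Fin.sum_univ_succ, submatrix_apply] using this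

/-- The E-BLUP of the random effects from the mean-shift outlier model
coincides with the E-BLUP from the model fit with the first observation
deleted. -/
theorem stmt_16 {n q p : ℕ}
    (G : Matrix (Fin q) (Fin q) ℝ) (hG : G.PosDef)
    (R : Matrix (Fin (n + 1)) (Fin (n + 1)) ℝ) (hR : R.PosDef)
    (Z : Matrix (Fin (n + 1)) (Fin q) ℝ)
    (V : Matrix (Fin (n + 1)) (Fin (n + 1)) ℝ) (hV : V = Z * G * Zᵀ + R)
    (X : Matrix (Fin (n + 1)) (Fin p) ℝ) (hX : IsUnit (Xᵀ * V⁻¹ * X).det)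
    (δ : Fin (n + 1) → ℝ) (hδ : δ = Pi.single 0 1)
    (hδX : δ ∉ Set.range X.mulVec)
    (y : Fin (n + 1) → ℝ)
    (PX : Matrix (Fin (n + 1)) (Fin (n + 1)) ℝ)
    (hPX : PX = V⁻¹ - V⁻¹ * X * (Xᵀ * V⁻¹ * X)⁻¹ * Xᵀ * V⁻¹)
    (Pδ : Matrix (Fin (n + 1)) (Fin (n + 1)) ℝ)
    (hPδ : Pδ = V⁻¹ - (δ ⬝ᵥ V⁻¹ *ᵥ δ)⁻¹ • (V⁻¹ * vecMulVec δ δ * V⁻¹))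
    -- the joint GLS estimates of the augmented (mean-shift) model
    (τhat : Fin p → ℝ) (hτ : τhat = (Xᵀ * Pδ * X)⁻¹ *ᵥ (Xᵀ *ᵥ (Pδ *ᵥ y)))
    (φhat : ℝ) (hφ : φhat = (δ ⬝ᵥ PX *ᵥ δ)⁻¹ * (δ ⬝ᵥ PX *ᵥ y))
    (utilde : Fin q → ℝ)
    (hu : utilde = G *ᵥ (Zᵀ *ᵥ (V⁻¹ *ᵥ (y - X *ᵥ τhat - φhat • δ))))
    (Z₁ : Matrix (Fin n) (Fin q) ℝ) (hZ₁ : Z₁ = Z.submatrix Fin.succ id)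
    (X₁ : Matrix (Fin n) (Fin p) ℝ) (hX₁ : X₁ = X.submatrix Fin.succ id)
    (R₁ : Matrix (Fin n) (Fin n) ℝ) (hR₁ : R₁ = R.submatrix Fin.succ Fin.succ)
    (V₁ : Matrix (Fin n) (Fin n) ℝ) (hV₁ : V₁ = Z₁ * G * Z₁ᵀ + R₁)
    (y₁ : Fin n → ℝ) (hy₁ : y₁ = fun i => y i.succ) :
    utilde = G *ᵥ (Z₁ᵀ *ᵥ (V₁⁻¹ *ᵥ (y₁ - X₁ *ᵥ τhat))) := by
  -- basic facts
  have hZt : Zᴴ = Zᵀ := conjTranspose_eq_transpose_of_trivial Z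
  have hVpd : V.PosDef := by
    rw [hV]
    exact Matrix.PosDef.posSemidef_add
      (by simpa [hZt] using hG.posSemidef.mul_mul_conjTranspose_same Z) hR
  have hVsym : Vᵀ = V := by
    have := hVpd.isHermitian
    rwa [Matrix.IsHermitian, conjTranspose_eq_transpose_of_trivial] at this
  have hVdet : IsUnit V.det := (Matrix.isUnit_iff_isUnit_det V).1 hVpd.isUnit
  have hVA : V * V⁻¹ = 1 := Matrix.mul_nonsing_inv V hVdet
  have hAV : V⁻¹ * V = 1 := Matrix.nonsing_inv_mul V hVdet
  have hApd : (V⁻¹).PosDef := hVpd.inv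
  have hAsym : (V⁻¹)ᵀ = V⁻¹ := by rw [Matrix.transpose_nonsing_inv, hVsym]
  have hδne : δ ≠ 0 := by
    rw [hδ]; intro h; simpa using congrFun h 0
  set c := δ ⬝ᵥ V⁻¹ *ᵥ δ with hcdef
  have hc : 0 < c := by
    rw [hcdef]
    have := hApd.dotProduct_mulVec_pos hδne
    simpa using this
  have hc0 : c ≠ 0 := ne_of_gt hc
  set M := Xᵀ * V⁻¹ * X with hMdef
  have hM1 : M * M⁻¹ = 1 := Matrix.mul_nonsing_inv _ hX
  have hM2 : M⁻¹ * M = 1 := Matrix.nonsing_inv_mul _ hX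
  have hMsym : Mᵀ = M := by
    rw [hMdef, Matrix.transpose_mul, Matrix.transpose_mul, hAsym, transpose_transpose,
      Matrix.mul_assoc]
  have hMisym : (M⁻¹)ᵀ = M⁻¹ := by rw [Matrix.transpose_nonsing_inv, hMsym]
  set v := Xᵀ *ᵥ V⁻¹ *ᵥ δ with hvdef
  set w := Xᵀ *ᵥ V⁻¹ *ᵥ y with hwdef
  set a := δ ⬝ᵥ V⁻¹ *ᵥ y with hadef
  set t := v ⬝ᵥ M⁻¹ *ᵥ v with htdef
  set s := v ⬝ᵥ M⁻¹ *ᵥ w with hsdef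
  have hdotA : ∀ u z : Fin (n+1) → ℝ, u ⬝ᵥ (V⁻¹ *ᵥ z) = (V⁻¹ *ᵥ u) ⬝ᵥ z := by
    intro u z; rw [dot_shift, hAsym]
  have hdotX : ∀ (u : Fin (n+1) → ℝ) (z : Fin p → ℝ),
      u ⬝ᵥ (X *ᵥ z) = (Xᵀ *ᵥ u) ⬝ᵥ z := fun u z => dot_shift X u z
  -- mulVec normal form for Pδ
  have hPδv : ∀ z : Fin (n+1) → ℝ,
      Pδ *ᵥ z = V⁻¹ *ᵥ z - (c⁻¹ * (δ ⬝ᵥ V⁻¹ *ᵥ z)) • (V⁻¹ *ᵥ δ) := by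
    intro z
    rw [hPδ, Matrix.sub_mulVec, Matrix.smul_mulVec]
    congr 1
    rw [← Matrix.mulVec_mulVec, ← Matrix.mulVec_mulVec, vmv_mulVec, Matrix.mulVec_smul,
      smul_smul]
  -- mulVec normal form for PX
  have hPXv : ∀ z : Fin (n+1) → ℝ,
      PX *ᵥ z = V⁻¹ *ᵥ z - V⁻¹ *ᵥ (X *ᵥ (M⁻¹ *ᵥ (Xᵀ *ᵥ (V⁻¹ *ᵥ z)))) := by
    intro z
    rw [hPX, Matrix.sub_mulVec]
    congr 1
    rw [← Matrix.mulVec_mulVec, ← Matrix.mulVec_mulVec, ← Matrix.mulVec_mulVec,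
      ← Matrix.mulVec_mulVec]
  have hdPX : δ ⬝ᵥ PX *ᵥ δ = c - t := by
    rw [hPXv δ, dotProduct_sub]
    congr 1
    rw [hdotA, hdotX, ← hvdef, htdef]
  have hyPX : δ ⬝ᵥ PX *ᵥ y = a - s := by
    rw [hPXv y, dotProduct_sub]
    congr 1
    rw [hdotA, hdotX, ← hvdef, ← hwdef, hsdef]
  set d := c - t with hddef
  have hdne : d ≠ 0 := by
    intro hd0
    set g := PX *ᵥ δ with hgdef
    have hXg : Xᵀ *ᵥ (V⁻¹ *ᵥ (X *ᵥ (M⁻¹ *ᵥ v))) = v := by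
      rw [Matrix.mulVec_mulVec, Matrix.mulVec_mulVec, Matrix.mulVec_mulVec, ← hMdef, hM1,
        Matrix.one_mulVec]
    have hVg : V *ᵥ g = δ - X *ᵥ (M⁻¹ *ᵥ v) := by
      rw [hgdef, hPXv δ, Matrix.mulVec_sub, Matrix.mulVec_mulVec, Matrix.mulVec_mulVec, hVA,
        Matrix.one_mulVec, Matrix.one_mulVec]
    have hgδ : g ⬝ᵥ δ = 0 := by
      rw [dotProduct_comm, hgdef, hdPX, hd0]
    have hgX : g ⬝ᵥ (X *ᵥ (M⁻¹ *ᵥ v)) = 0 := by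
      rw [hdotX]
      have hz : Xᵀ *ᵥ g = 0 := by
        rw [hgdef, hPXv δ, Matrix.mulVec_sub, hXg, sub_self]
      rw [hz, zero_dotProduct]
    have hquad : g ⬝ᵥ V *ᵥ g = 0 := by
      rw [hVg, dotProduct_sub, hgδ, hgX, sub_self]
    have hg0 : g = 0 := by
      by_contra hgne
      have hpos : 0 < g ⬝ᵥ V *ᵥ g := by simpa using hVpd.dotProduct_mulVec_pos hgne
      exact hpos.ne' hquad
    have heq : V⁻¹ *ᵥ δ = V⁻¹ *ᵥ (X *ᵥ (M⁻¹ *ᵥ v)) := by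
      have h3 := hg0
      rw [hgdef, hPXv δ, sub_eq_zero] at h3
      exact h3
    have hδr : δ = X *ᵥ (M⁻¹ *ᵥ v) := by
      have h2 : V *ᵥ (V⁻¹ *ᵥ δ) = V *ᵥ (V⁻¹ *ᵥ (X *ᵥ (M⁻¹ *ᵥ v))) := congrArg _ heq
      rw [Matrix.mulVec_mulVec, Matrix.mulVec_mulVec, hVA, Matrix.one_mulVec,
        Matrix.one_mulVec] at h2
      exact h2
    exact hδX ⟨M⁻¹ *ᵥ v, hδr.symm⟩
  -- the inverse of the augmented normal matrix (Sherman–Morrison)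
  have hN : Xᵀ * Pδ * X = M - c⁻¹ • vecMulVec v v := by
    rw [hPδ, Matrix.mul_sub, Matrix.sub_mul, ← hMdef]
    congr 1
    rw [Matrix.mul_smul, Matrix.smul_mul]
    congr 1
    calc Xᵀ * (V⁻¹ * vecMulVec δ δ * V⁻¹) * X
        = (Xᵀ * V⁻¹) * vecMulVec δ δ * (V⁻¹ * X) := by
          rw [← Matrix.mul_assoc, ← Matrix.mul_assoc, Matrix.mul_assoc (Xᵀ * V⁻¹ * vecMulVec δ δ)]
      _ = vecMulVec ((Xᵀ * V⁻¹) *ᵥ δ) ((V⁻¹ * X)ᵀ *ᵥ δ) := by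
          rw [mul_vmv, vmv_mul]
      _ = vecMulVec v v := by
          rw [Matrix.transpose_mul, hAsym, ← Matrix.mulVec_mulVec, hvdef]
  have ht' : t = c - d := by rw [hddef]; ring
  have hNinv : (Xᵀ * Pδ * X)⁻¹ = M⁻¹ + d⁻¹ • (M⁻¹ * vecMulVec v v * M⁻¹) := by
    apply Matrix.inv_eq_right_inv
    rw [hN]
    have e1 : M * (M⁻¹ * vecMulVec v v * M⁻¹) = vecMulVec v v * M⁻¹ := by
      rw [← Matrix.mul_assoc, ← Matrix.mul_assoc, hM1, Matrix.one_mul]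
    have e2 : vecMulVec v v * M⁻¹ * vecMulVec v v = t • vecMulVec v v := by
      rw [vmv_mul, hMisym, vmv_mul_vmv, dotProduct_comm, ← htdef]
    have e3 : vecMulVec v v * (M⁻¹ * vecMulVec v v * M⁻¹) = t • (vecMulVec v v * M⁻¹) := by
      rw [← Matrix.mul_assoc, ← Matrix.mul_assoc, e2, Matrix.smul_mul]
    rw [Matrix.sub_mul, Matrix.mul_add, Matrix.mul_smul, e1, hM1, Matrix.mul_add,
      Matrix.smul_mul, Matrix.smul_mul, Matrix.mul_smul, e3]
    have hco : c⁻¹ • (vecMulVec v v * M⁻¹) + c⁻¹ • (d⁻¹ • (t • (vecMulVec v v * M⁻¹)))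
        = d⁻¹ • (vecMulVec v v * M⁻¹) := by
      rw [smul_smul, smul_smul, ← add_smul]
      congr 1
      rw [ht']
      field_simp
      ring
    rw [hco, add_sub_cancel_right]
  have hPδy : Xᵀ *ᵥ (Pδ *ᵥ y) = w - (c⁻¹ * a) • v := by
    rw [hPδv y, Matrix.mulVec_sub, Matrix.mulVec_smul, hvdef, hwdef, hadef]
  -- compute v ⬝ᵥ τhat
  have hvτ : v ⬝ᵥ τhat = (s - c⁻¹ * a * t) + d⁻¹ * ((s - c⁻¹ * a * t) * t) := by
    have hvMiu : v ⬝ᵥ M⁻¹ *ᵥ (w - (c⁻¹ * a) • v) = s - c⁻¹ * a * t := by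
      rw [Matrix.mulVec_sub, Matrix.mulVec_smul, dotProduct_sub, dotProduct_smul]
      simp only [smul_eq_mul, ← hsdef, ← htdef]
    rw [hτ, hNinv, hPδy, Matrix.add_mulVec, dotProduct_add, Matrix.smul_mulVec,
      ← Matrix.mulVec_mulVec, ← Matrix.mulVec_mulVec, vmv_mulVec, Matrix.mulVec_smul,
      hvMiu, dotProduct_smul, smul_eq_mul, dotProduct_smul, smul_eq_mul, ← htdef]
  have hφd : φhat = d⁻¹ * (a - s) := by
    rw [hφ, hdPX, hyPX]
  have hres : δ ⬝ᵥ V⁻¹ *ᵥ (y - X *ᵥ τhat) = a - v ⬝ᵥ τhat := by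
    rw [Matrix.mulVec_sub, dotProduct_sub]
    congr 1
    rw [hdotA, hdotX, ← hvdef]
  have hφc : φhat = c⁻¹ * (δ ⬝ᵥ V⁻¹ *ᵥ (y - X *ᵥ τhat)) := by
    rw [hres, hvτ, hφd, ht']
    field_simp
    ring
  -- Step 1: the residual identity
  have hstep1 : V⁻¹ *ᵥ (y - X *ᵥ τhat - φhat • δ) = Pδ *ᵥ (y - X *ᵥ τhat) := by
    rw [hPδv (y - X *ᵥ τhat), Matrix.mulVec_sub, Matrix.mulVec_smul, hφc]
  -- Step 2: Pδ is the bordered inverse of V₁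
  have hV₁V : V₁ = V.submatrix Fin.succ Fin.succ := by
    rw [hV₁, hZ₁, hR₁, hV, Matrix.submatrix_add]
    congr 1
  have hV₁pd : V₁.PosDef := by rw [hV₁V]; exact posDef_submatrix_succ hVpd
  have hV₁det : IsUnit V₁.det := (Matrix.isUnit_iff_isUnit_det V₁).1 hV₁pd.isUnit
  have hV₁i : V₁⁻¹ * V₁ = 1 := Matrix.nonsing_inv_mul V₁ hV₁det
  set Q : Matrix (Fin (n+1)) (Fin (n+1)) ℝ :=
    Matrix.of (fun i j =>
      Fin.cases 0 (fun i' => Fin.cases 0 (fun j' => V₁⁻¹ i' j') j) i) with hQdef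
  set uv : Fin (n+1) → ℝ :=
    fun i => Fin.cases 1 (fun i' => -((V₁⁻¹ *ᵥ fun k => V k.succ 0) i')) i with huvdef
  have hδ0 : δ 0 = 1 := by rw [hδ]; simp
  have hδs : ∀ j' : Fin n, δ j'.succ = 0 := by
    intro j'; rw [hδ]
    exact Pi.single_eq_of_ne (Fin.succ_ne_zero j') 1
  have hQV : Q * V = 1 - vecMulVec uv δ := by
    ext i j
    rw [Matrix.mul_apply]
    refine Fin.cases ?_ (fun i' => ?_) i
    · have hz : ∀ k, Q 0 k * V k j = 0 := by
        intro k; rw [hQdef]; simp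
      rw [Finset.sum_congr rfl fun k _ => hz k, Finset.sum_const, smul_zero]
      refine Fin.cases ?_ (fun j' => ?_) j
      · simp [vecMulVec_apply, huvdef, hδ0, one_apply]
      · simp [vecMulVec_apply, huvdef, hδs, one_apply, (Fin.succ_ne_zero j').symm]
    · have hsum : ∑ k, Q i'.succ k * V k j
          = Q i'.succ 0 * V 0 j + ∑ k' : Fin n, Q i'.succ k'.succ * V k'.succ j :=
        Fin.sum_univ_succ _
      rw [hsum]
      have hq0 : Q i'.succ 0 = 0 := by rw [hQdef]; simp
      have hqs : ∀ k' : Fin n, Q i'.succ k'.succ = V₁⁻¹ i' k' := by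
        intro k'; rw [hQdef]; simp
      rw [hq0, zero_mul, zero_add]
      refine Fin.cases ?_ (fun j' => ?_) j
      · rw [Matrix.sub_apply, vecMulVec_apply, one_apply_ne (Fin.succ_ne_zero i'), hδ0, huvdef]
        simp [Matrix.mulVec, dotProduct, hqs]
      · have : ∑ k' : Fin n, Q i'.succ k'.succ * V k'.succ j'.succ
            = ∑ k' : Fin n, V₁⁻¹ i' k' * V₁ k' j' := by
          refine Finset.sum_congr rfl fun k' _ => ?_
          rw [hqs, hV₁V, Matrix.submatrix_apply]
        rw [this, ← Matrix.mul_apply, hV₁i, Matrix.sub_apply, vecMulVec_apply, hδs, mul_zero, sub_zero]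
        rcases eq_or_ne i' j' with h | h
        · subst h; rw [one_apply_eq, one_apply_eq]
        · rw [one_apply_ne h, one_apply_ne (fun hc => h (Fin.succ_injective _ hc))]
  have hPδV : Pδ * V = 1 - c⁻¹ • vecMulVec (V⁻¹ *ᵥ δ) δ := by
    rw [hPδ, Matrix.sub_mul, hAV, Matrix.smul_mul]
    congr 2
    rw [Matrix.mul_assoc, hAV, Matrix.mul_one, mul_vmv]
  have hQδ : Q *ᵥ δ = 0 := by
    rw [hδ, Matrix.mulVec_single]
    funext i
    refine Fin.cases ?_ (fun i' => ?_) i <;> · rw [hQdef]; simp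
  have hPδδ : Pδ *ᵥ δ = 0 := by
    rw [hPδv δ, ← hcdef, inv_mul_cancel₀ hc0, one_smul, sub_self]
  set s0 : Fin (n+1) → ℝ := uv - c⁻¹ • (V⁻¹ *ᵥ δ) with hs0def
  have hMV : (Pδ - Q) * V = vecMulVec s0 δ := by
    rw [Matrix.sub_mul, hPδV, hQV, hs0def]
    ext i j
    simp only [Matrix.sub_apply, vecMulVec_apply, Pi.sub_apply, Pi.smul_apply, Matrix.smul_apply,
      smul_eq_mul]
    ring
  have hPQ : Pδ - Q = vecMulVec s0 (V⁻¹ *ᵥ δ) := by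
    have h1 : Pδ - Q = ((Pδ - Q) * V) * V⁻¹ := by
      rw [Matrix.mul_assoc, hVA, Matrix.mul_one]
    rw [h1, hMV, vmv_mul, hAsym]
  have hs00 : s0 = 0 := by
    have h2 : (Pδ - Q) *ᵥ δ = 0 := by rw [Matrix.sub_mulVec, hPδδ, hQδ, sub_self]
    rw [hPQ, vmv_mulVec] at h2
    have hcc : (V⁻¹ *ᵥ δ) ⬝ᵥ δ = c := by rw [dotProduct_comm, hcdef]
    rw [hcc] at h2
    exact (smul_eq_zero.mp h2).resolve_left hc0
  have hPQ0 : Pδ = Q := by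
    have h3 : Pδ - Q = 0 := by
      rw [hPQ, hs00]
      ext i j
      simp [vecMulVec_apply]
    exact sub_eq_zero.mp h3
  -- Step 3: conclude
  have hXτ : ∀ j' : Fin n, (X₁ *ᵥ τhat) j' = (X *ᵥ τhat) j'.succ := by
    intro j'; rw [hX₁]
    simp [Matrix.mulVec, Matrix.submatrix_apply, dotProduct]
  have hQr0 : (Q *ᵥ (y - X *ᵥ τhat)) 0 = 0 := by
    have : ∀ k, Q 0 k * (y - X *ᵥ τhat) k = 0 := by
      intro k; rw [hQdef]; simp
    simp only [Matrix.mulVec, dotProduct]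
    rw [Finset.sum_congr rfl fun k _ => this k, Finset.sum_const, smul_zero]
  have hQrs : ∀ i' : Fin n,
      (Q *ᵥ (y - X *ᵥ τhat)) i'.succ = (V₁⁻¹ *ᵥ (y₁ - X₁ *ᵥ τhat)) i' := by
    intro i'
    have hqs : ∀ k' : Fin n, Q i'.succ k'.succ = V₁⁻¹ i' k' := by
      intro k'; rw [hQdef]; simp
    have hq0 : Q i'.succ 0 = 0 := by rw [hQdef]; simp
    simp only [Matrix.mulVec, dotProduct]
    rw [Fin.sum_univ_succ, hq0, zero_mul, zero_add]
    refine Finset.sum_congr rfl fun k' _ => ?_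
    rw [hqs, Pi.sub_apply, Pi.sub_apply, hy₁, hXτ]
  have hZQ : Zᵀ *ᵥ (Q *ᵥ (y - X *ᵥ τhat)) = Z₁ᵀ *ᵥ (V₁⁻¹ *ᵥ (y₁ - X₁ *ᵥ τhat)) := by
    funext k
    have lhs : (Zᵀ *ᵥ (Q *ᵥ (y - X *ᵥ τhat))) k
        = ∑ i, Z i k * (Q *ᵥ (y - X *ᵥ τhat)) i := by
      simp [Matrix.mulVec, dotProduct]
    have rhs : (Z₁ᵀ *ᵥ (V₁⁻¹ *ᵥ (y₁ - X₁ *ᵥ τhat))) k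
        = ∑ i' : Fin n, Z i'.succ k * (V₁⁻¹ *ᵥ (y₁ - X₁ *ᵥ τhat)) i' := by
      simp [Matrix.mulVec, dotProduct, hZ₁]
    rw [lhs, rhs, Fin.sum_univ_succ, hQr0, mul_zero, zero_add]
    exact Finset.sum_congr rfl fun i' _ => by rw [hQrs]
  rw [hu, hstep1, hPQ0, hZQ]
end

section
/- Let V(ω) = V + ω c δδ^T with V positive definite, c = δ^T R δ > 0, δ = e_1, X full column rank with δ ∉ col(X). Define τ̂(ω) = (X^T V(ω)^{-1} X)^{-1} X^T V(ω)^{-1} y. Then lim_{ω→∞} τ̂(ω) = (X^T P_δ X)^{-1} X^T P_δ y, the GLS estimator with the first observation deleted (where P_δ = V^{-1} - V^{-1}δ(δ^T V^{-1}δ)^{-1}δ^T V^{-1}). -/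
open Matrix Filter

lemma aux_vmv {n : ℕ} (δ : Fin n → ℝ) (M : Matrix (Fin n) (Fin n) ℝ) :
    vecMulVec δ δ * M * vecMulVec δ δ = (δ ⬝ᵥ M *ᵥ δ) • vecMulVec δ δ := by
  ext i j
  simp [mul_apply, vecMulVec_apply, dotProduct, mulVec, Finset.sum_mul, Finset.mul_sum]
  rw [Finset.sum_comm]
  congr 1; ext k; congr 1; ext l; ring

lemma aux_sm {n : ℕ}
    (V : Matrix (Fin (n+1)) (Fin (n+1)) ℝ) (hV : V.PosDef)
    (δ : Fin (n + 1) → ℝ) (hδ : δ = Pi.single 0 1)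
    (s : ℝ) (hs : 0 ≤ s) :
    (V + s • vecMulVec δ δ)⁻¹
      = V⁻¹ - (s / (1 + s * (δ ⬝ᵥ V⁻¹ *ᵥ δ))) • (V⁻¹ * vecMulVec δ δ * V⁻¹) := by
  have hd : 0 < δ ⬝ᵥ V⁻¹ *ᵥ δ := by
    have h := hV.inv.dotProduct_mulVec_pos (x := δ) (by simp [hδ])
    simpa using h
  set d := δ ⬝ᵥ V⁻¹ *ᵥ δ
  have hden : 1 + s * d ≠ 0 := by positivity
  have hVu : IsUnit V.det := isUnit_iff_ne_zero.2 (ne_of_gt hV.det_pos)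
  apply inv_eq_right_inv
  have h1 : V * V⁻¹ = 1 := mul_nonsing_inv V hVu
  set A := vecMulVec δ δ
  have hAK : A * (V⁻¹ * A * V⁻¹) = d • (A * V⁻¹) := by
    rw [← Matrix.mul_assoc, ← Matrix.mul_assoc, aux_vmv, Matrix.smul_mul]
  have hVK : V * (V⁻¹ * A * V⁻¹) = A * V⁻¹ := by
    rw [← Matrix.mul_assoc, ← Matrix.mul_assoc, h1, Matrix.one_mul]
  have expand : (V + s • A) * (V⁻¹ - (s/(1+s*d)) • (V⁻¹ * A * V⁻¹))
      = 1 + (s - (s/(1+s*d)) - s * (s/(1+s*d)) * d) • (A * V⁻¹) := by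
    rw [Matrix.add_mul, Matrix.mul_sub, Matrix.mul_sub, Matrix.smul_mul, Matrix.smul_mul,
      Matrix.mul_smul, Matrix.mul_smul, h1, hVK, hAK, smul_smul, smul_smul]
    module
  rw [expand]
  have : s - (s/(1+s*d)) - s * (s/(1+s*d)) * d = 0 := by
    field_simp; ring
  rw [this, zero_smul, add_zero]

/-- As `ω → ∞`, the GLS estimator under the variance-shift model converges to
the GLS estimator with the first observation deleted. -/
theorem stmt_18 {n p : ℕ}
    (V R : Matrix (Fin (n + 1)) (Fin (n + 1)) ℝ) (hV : V.PosDef) (hR : R.PosDef)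
    (δ : Fin (n + 1) → ℝ) (hδ : δ = Pi.single 0 1)
    (c : ℝ) (hc : c = δ ⬝ᵥ R *ᵥ δ) (hcpos : 0 < c)
    (X : Matrix (Fin (n + 1)) (Fin p) ℝ) (hX : IsUnit (Xᵀ * V⁻¹ * X).det)
    (hδX : δ ∉ Set.range X.mulVec)
    (Pδ : Matrix (Fin (n + 1)) (Fin (n + 1)) ℝ)
    (hPδ : Pδ = V⁻¹ - (δ ⬝ᵥ V⁻¹ *ᵥ δ)⁻¹ • (V⁻¹ * vecMulVec δ δ * V⁻¹))
    -- the deleted-observation design has full column rank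
    (hX₁ : IsUnit (Xᵀ * Pδ * X).det)
    (Vω : ℝ → Matrix (Fin (n + 1)) (Fin (n + 1)) ℝ)
    (hVω : ∀ ω, Vω ω = V + (ω * c) • vecMulVec δ δ)
    (y : Fin (n + 1) → ℝ)
    (τhat : ℝ → Fin p → ℝ)
    (hτ : ∀ ω, τhat ω = (Xᵀ * (Vω ω)⁻¹ * X)⁻¹ *ᵥ (Xᵀ *ᵥ ((Vω ω)⁻¹ *ᵥ y))) :
    Tendsto τhat atTop (nhds ((Xᵀ * Pδ * X)⁻¹ *ᵥ (Xᵀ *ᵥ (Pδ *ᵥ y)))) := by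
  have hd : 0 < δ ⬝ᵥ V⁻¹ *ᵥ δ := by
    have h := hV.inv.dotProduct_mulVec_pos (x := δ) (by simp [hδ])
    simpa using h
  set d := δ ⬝ᵥ V⁻¹ *ᵥ δ with hd_def
  set K := V⁻¹ * vecMulVec δ δ * V⁻¹ with hK
  -- the coefficient limit
  have hcd : c * d ≠ 0 := by positivity
  have ht1 : Tendsto (fun ω : ℝ => ω⁻¹ + c * d) atTop (nhds (0 + c * d)) :=
    tendsto_inv_atTop_zero.add tendsto_const_nhds
  have ht2 : Tendsto (fun ω : ℝ => c / (ω⁻¹ + c * d)) atTop (nhds (c / (0 + c * d))) :=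
    tendsto_const_nhds.div ht1 (by simpa using hcd)
  have hlim : Tendsto (fun ω : ℝ => ω * c / (1 + ω * c * d)) atTop (nhds d⁻¹) := by
    have heq : (fun ω : ℝ => c / (ω⁻¹ + c * d)) =ᶠ[atTop]
        (fun ω : ℝ => ω * c / (1 + ω * c * d)) := by
      filter_upwards [eventually_gt_atTop (0:ℝ)] with ω hω
      have hω' : ω ≠ 0 := ne_of_gt hω
      have hden : 1 + ω * c * d ≠ 0 := by positivity
      field_simp
    have : c / (0 + c * d) = d⁻¹ := by
      rw [zero_add]
      field_simp
    exact this ▸ ht2.congr' heq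
  -- limit of the inverses
  have hMinv : Tendsto (fun ω => (Vω ω)⁻¹) atTop (nhds Pδ) := by
    have hg : Tendsto (fun ω : ℝ => V⁻¹ - (ω * c / (1 + ω * c * d)) • K) atTop
        (nhds (V⁻¹ - d⁻¹ • K)) :=
      tendsto_const_nhds.sub (hlim.smul tendsto_const_nhds)
    rw [hPδ]
    apply hg.congr'
    filter_upwards [eventually_ge_atTop (0:ℝ)] with ω hω
    rw [hVω ω, aux_sm V hV δ hδ (ω * c) (by positivity)]
  -- continuity of the estimator map at Pδ
  have hdetne : (Xᵀ * Pδ * X).det ≠ 0 := isUnit_iff_ne_zero.1 hX₁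
  have hmul : Continuous fun M : Matrix (Fin (n+1)) (Fin (n+1)) ℝ => Xᵀ * M * X :=
    (continuous_const.matrix_mul continuous_id).matrix_mul continuous_const
  have hinv : ContinuousAt Inv.inv (Xᵀ * Pδ * X) := by
    apply continuousAt_matrix_inv
    rw [Ring.inverse_eq_inv']
    exact continuousAt_inv₀ hdetne
  have hA : ContinuousAt (fun M : Matrix (Fin (n+1)) (Fin (n+1)) ℝ => (Xᵀ * M * X)⁻¹) Pδ :=
    ContinuousAt.comp (x := Pδ) hinv hmul.continuousAt
  have hv : Continuous fun M : Matrix (Fin (n+1)) (Fin (n+1)) ℝ => Xᵀ *ᵥ (M *ᵥ y) :=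
    continuous_const.matrix_mulVec (continuous_id.matrix_mulVec continuous_const)
  have hbil : Continuous fun q : Matrix (Fin p) (Fin p) ℝ × (Fin p → ℝ) => q.1 *ᵥ q.2 :=
    continuous_fst.matrix_mulVec continuous_snd
  have hF : ContinuousAt (fun M : Matrix (Fin (n+1)) (Fin (n+1)) ℝ =>
      (Xᵀ * M * X)⁻¹ *ᵥ (Xᵀ *ᵥ (M *ᵥ y))) Pδ :=
    hbil.continuousAt.comp (hA.prodMk hv.continuousAt)
  have := hF.tendsto.comp hMinv
  refine this.congr fun ω => ?_
  rw [hτ ω]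
  rfl
end
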